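/- For every natural number n and real α, the finite operator exponential exp(-Λ) applied to x^n, where Λ(p) = x·p'' + (α+1)·p', i.e. the polynomial ∑_{j=0}^{n} (-1)^j Λ^j(x^n)/j!, equals (-1)^n · n! · L_n^α(x). -/

import Mathlib

/-!
Since `Λ (x^k) = k (k + α) x^(k-1)`, iterating gives
`Λ^j (x^n) = n (n-1) ⋯ (n-j+1) · (n+α)(n+α-1) ⋯ (n+α-j+1) · x^(n-j)`,
and after the substitution `j = n - i` the `j`-th term of `exp(-Λ) x^n` is `(-1)^n n!` times the
`x^i` term of `L_n^α`.
-/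

open Polynomial

/-- The operator Λ = x·d²/dx² + (α+1)·d/dx on real polynomials. -/
noncomputable def Lam (α : ℝ) (q : ℝ[X]) : ℝ[X] :=
  X * derivative (derivative q) + C (α + 1) * derivative q

/-- The generalized Laguerre polynomial
`L_n^α(x) = ∑_{i=0}^n (-1)^i (∏_{j=0}^{n-i-1}(n+α-j)/(n-i)!) x^i / i!`. -/
noncomputable def lag (α : ℝ) (n : ℕ) : ℝ[X] :=
  ∑ i ∈ Finset.range (n + 1),
    C ((-1 : ℝ) ^ i * (∏ j ∈ Finset.range (n - i), ((n : ℝ) + α - j)) /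
        ((Nat.factorial (n - i)) * (Nat.factorial i))) * X ^ i

lemma Lam_C_mul (α c : ℝ) (p : ℝ[X]) : Lam α (C c * p) = C c * Lam α p := by
  simp only [Lam, derivative_C_mul]
  ring

lemma Lam_X_pow (α : ℝ) (k : ℕ) : Lam α (X ^ k) = C ((k : ℝ) * (k + α)) * X ^ (k - 1) := by
  rcases k with _ | _ | k
  · simp [Lam]
  · simp [Lam, add_comm]
  · simp only [Lam, derivative_X_pow, derivative_C_mul]
    rw [Nat.add_sub_cancel, pow_succ' X k]
    push_cast
    simp only [C_mul, C_add, C_1, map_natCast]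
    ring

lemma Lam_iterate_X_pow (α : ℝ) (n j : ℕ) :
    (Lam α)^[j] (X ^ n) =
      C (n.descFactorial j * ∏ m ∈ Finset.range j, ((n : ℝ) + α - m)) * X ^ (n - j) := by
  induction j with
  | zero => simp
  | succ j ih =>
    rw [Function.iterate_succ_apply', ih, Lam_C_mul, Lam_X_pow, ← mul_assoc, ← C_mul,
      Nat.descFactorial_succ, Finset.prod_range_succ, Nat.sub_sub]
    congr 2
    rcases le_or_gt n j with hnj | hjn
    · simp [Nat.sub_eq_zero_of_le hnj]
    · push_cast [Nat.cast_sub hjn.le]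
      ring

theorem stmt_4 (α : ℝ) (n : ℕ) :
    (∑ j ∈ Finset.range (n + 1),
        C ((-1 : ℝ) ^ j / (Nat.factorial j)) * (Lam α)^[j] (X ^ n)) =
      C ((-1 : ℝ) ^ n * (Nat.factorial n)) * lag α n := by
  rw [lag, Finset.mul_sum, ← Finset.sum_range_reflect]
  refine Finset.sum_congr rfl fun i hi => ?_
  have hin : i ≤ n := Nat.lt_succ_iff.mp (Finset.mem_range.mp hi)
  rw [Lam_iterate_X_pow, Nat.add_sub_cancel, Nat.sub_sub_self hin]
  simp only [← mul_assoc, ← C_mul]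
  congr 2
  have hfact : (i.factorial : ℝ) * n.descFactorial (n - i) = n.factorial := by
    have := Nat.factorial_mul_descFactorial (Nat.sub_le n i)
    rw [Nat.sub_sub_self hin] at this
    exact_mod_cast this
  have hsign : (-1 : ℝ) ^ (n - i) = (-1) ^ n * (-1) ^ i := by
    rw [pow_sub₀ _ (by norm_num) hin, ← inv_pow, inv_neg, inv_one]
  rw [← hfact, hsign]
  field_simp
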